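/- arXiv:2310.16798 — 7 statements merged into one kernel-verified Lean document; each statement's English description precedes it below -/
import Mathlib

section
/- If (p,u) can reach (q,v) in a continuous VASS via firing sequence π, then for every rational α with 0 < α ≤ 1, (p,u) can reach (q, (1−α)·u + α·v) via the firing sequence α·π. -/
/-- Componentwise nonnegativity of a rational vector. -/
def Nonneg {d : ℕ} (v : Fin d → ℚ) : Prop := ∀ i, 0 ≤ v i

/-- A continuous VASS: states `Q` and rules labeled by integer update vectors. -/
structure CVASS (Q : Type) (d : ℕ) where
  rules : Set (Q × (Fin d → ℤ) × Q)

/-- A run with ℚ₊ semantics along a firing sequence (list of (fraction, transition) pairs):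
every firing fraction is in (0,1] and all configurations stay nonnegative. -/
inductive Run {Q : Type} {d : ℕ} (M : CVASS Q d) :
    Q × (Fin d → ℚ) → List (ℚ × (Fin d → ℤ)) → Q × (Fin d → ℚ) → Prop where
  | refl (p : Q) (u : Fin d → ℚ) (hu : Nonneg u) : Run M (p, u) [] (p, u)
  | step {p q r : Q} {u w : Fin d → ℚ} {α : ℚ} {t : Fin d → ℤ}
      {rest : List (ℚ × (Fin d → ℤ))}
      (hrule : (p, t, q) ∈ M.rules) (h0 : 0 < α) (h1 : α ≤ 1)
      (hu : Nonneg u) (hv : Nonneg (fun i => u i + α * (t i : ℚ)))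
      (hrest : Run M (q, fun i => u i + α * (t i : ℚ)) rest (r, w)) :
      Run M (p, u) ((α, t) :: rest) (r, w)

/-- Scale every firing fraction of a firing sequence by `α`. -/
def scaleSeq {d : ℕ} (α : ℚ) (π : List (ℚ × (Fin d → ℤ))) : List (ℚ × (Fin d → ℤ)) :=
  π.map fun x => (α * x.1, x.2)

lemma run_start_nonneg {Q : Type} {d : ℕ} {M : CVASS Q d} {p q : Q}
    {u v : Fin d → ℚ} {π : List (ℚ × (Fin d → ℤ))}
    (h : Run M (p, u) π (q, v)) : Nonneg u := by
  cases h with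
  | refl _ _ hu => exact hu
  | step _ _ _ hu _ _ => exact hu

lemma cvass_run_partial_aux {Q : Type} {d : ℕ} (M : CVASS Q d) (α : ℚ)
    (hα0 : 0 < α) (hα1 : α ≤ 1) :
    ∀ {c c' : Q × (Fin d → ℚ)} {π : List (ℚ × (Fin d → ℤ))}, Run M c π c' →
    ∀ (z : Fin d → ℚ), Nonneg z →
    Run M (c.1, fun i => (1 - α) * z i + α * c.2 i) (scaleSeq α π)
      (c'.1, fun i => (1 - α) * z i + α * c'.2 i) := by
  intro c c' π h
  induction h with
  | refl p u hu =>
    intro z hz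
    exact Run.refl _ _ (fun i => add_nonneg
      (mul_nonneg (by linarith) (hz i)) (mul_nonneg hα0.le (hu i)))
  | step hrule h0 h1 hu hv hrest ih =>
    intro z hz
    rename_i p q' r u w β t rest
    have key : (fun i => ((1 - α) * z i + α * u i) + (α * β) * (t i : ℚ))
        = fun i => (1 - α) * z i + α * (u i + β * (t i : ℚ)) := by
      funext i; ring
    refine Run.step hrule (mul_pos hα0 h0)
      (le_trans (mul_le_of_le_one_left h0.le hα1) h1)
      (fun i => add_nonneg (mul_nonneg (by linarith) (hz i))
        (mul_nonneg hα0.le (hu i)))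
      ?_ ?_
    · rw [key]
      exact fun i => add_nonneg (mul_nonneg (by linarith) (hz i))
        (mul_nonneg hα0.le (hv i))
    · rw [key]
      exact ih z hz

/-- If `(p,u)` reaches `(q,v)` via `π`, then for every `0 < α ≤ 1`,
`(p,u)` reaches `(q, (1−α)·u + α·v)` via the firing sequence `α·π`. -/
theorem cvass_run_partial {Q : Type} {d : ℕ} (M : CVASS Q d) (p q : Q)
    (u v : Fin d → ℚ) (π : List (ℚ × (Fin d → ℤ))) (α : ℚ)
    (hα0 : 0 < α) (hα1 : α ≤ 1)
    (h : Run M (p, u) π (q, v)) :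
    Run M (p, u) (scaleSeq α π) (q, fun i => (1 - α) * u i + α * v i) := by
  have := cvass_run_partial_aux M α hα0 hα1 h u (run_start_nonneg h)
  have hu : (fun i => (1 - α) * u i + α * u i) = u := by funext i; ring
  simpa [hu] using this
end

section
/- If there is a run (p,u) →_{ℚ₊} (q,v) via firing sequence π = α₁t₁ … α_m t_m, then the firing sequence π' = (α₁/2)t₁ (α₂/4)t₂ … (α_m/2^m)t_m yields a run (p,u) →_{ℚ₊} (q,v') for some v' such that path(π') = path(π), and for every transition t occurring in π', every coordinate on which the vector of t is nonzero is strictly positive in v'. -/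
private lemma mapIdx_congr' {α β : Type*} (l : List α) :
    ∀ (f g : ℕ → α → β), (∀ k x, f k x = g k x) → l.mapIdx f = l.mapIdx g := by
  induction l with
  | nil => intros; simp
  | cons a l ih =>
    intro f g h
    simp only [List.mapIdx_cons, h]
    exact congrArg _ (ih _ _ fun k x => h (k + 1) x)

private lemma mapIdx_snd {γ δ : Type*} (l : List (γ × δ)) (f : ℕ → γ → γ) :
    (l.mapIdx fun k x => (f k x.1, x.2)).map Prod.snd = l.map Prod.snd := by
  induction l generalizing f with
  | nil => simp
  | cons a l ih => simp only [List.mapIdx_cons, List.map_cons, ih]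

private lemma run_aux {Q : Type} {d : ℕ} {M : CVASS Q d}
    {c c' : Q × (Fin d → ℚ)} {π : List (ℚ × (Fin d → ℤ))}
    (h : Run M c π c') :
    ∀ (n : ℕ) (s : Fin d → ℚ), Nonneg s →
    ∃ v', Run M (c.1, fun i => c.2 i / 2 ^ n + s i)
        (π.mapIdx fun k x => (x.1 / 2 ^ (k + n + 1), x.2)) (c'.1, v') ∧
      (∀ i, 0 < c.2 i → 0 < v' i) ∧ (∀ i, 0 < s i → 0 < v' i) ∧
      (∀ x ∈ π, ∀ i, x.2 i ≠ 0 → 0 < v' i) := by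
  induction h with
  | refl p u hu =>
    intro n s hs
    refine ⟨fun i => u i / 2 ^ n + s i, ?_, ?_, ?_, by simp⟩
    · simpa using Run.refl p _ (fun i => by have := hu i; have := hs i; positivity)
    · intro i hi
      have := hs i
      have : 0 < u i / 2 ^ n := by positivity
      linarith [hs i]
    · intro i hi
      have : 0 ≤ u i / 2 ^ n := by have := hu i; positivity
      linarith
  | @step p q r u w α t rest hrule h0 h1 hu hv hrest ih =>
    intro n s hs
    obtain ⟨v', hrun', hpu, hps, htouch⟩ :=
      ih (n + 1) (fun i => s i + u i / 2 ^ (n + 1))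
        (fun i => by have := hs i; have := hu i; positivity)
    have heq : ∀ i, (u i / 2 ^ n + s i) + α / 2 ^ (0 + n + 1) * (t i : ℚ)
        = (u i + α * (t i : ℚ)) / 2 ^ (n + 1) + (s i + u i / 2 ^ (n + 1)) := by
      intro i
      have h2 : (2 : ℚ) ^ (n + 1) = 2 ^ n * 2 := by ring
      rw [Nat.zero_add, h2]
      field_simp
      ring
    refine ⟨v', ?_, ?_, ?_, ?_⟩
    · rw [List.mapIdx_cons]
      refine Run.step hrule (by positivity) ?_
        (fun i => by have := hu i; have := hs i; positivity) ?_ ?_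
      · rw [div_le_one (by positivity)]
        calc α ≤ 1 := h1
          _ ≤ 2 ^ (0 + n + 1) := one_le_pow₀ (by norm_num)
      · intro i
        simp only
        rw [heq i]
        have := hv i
        have := hs i
        have := hu i
        positivity
      · have hfun : (fun i => (u i / 2 ^ n + s i) + α / 2 ^ (0 + n + 1) * (t i : ℚ))
            = fun i => (u i + α * (t i : ℚ)) / 2 ^ (n + 1) + (s i + u i / 2 ^ (n + 1)) :=
          funext heq
        have hlist : (rest.mapIdx fun k x => (x.1 / 2 ^ (k + 1 + n + 1), x.2))
            = rest.mapIdx fun k x => (x.1 / 2 ^ (k + (n + 1) + 1), x.2) := by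
          refine mapIdx_congr' _ _ _ fun k x => ?_
          have : k + 1 + n + 1 = k + (n + 1) + 1 := by omega
          rw [this]
        rw [hfun, hlist]
        exact hrun'
    · intro i hi
      have h' : (0 : ℚ) < u i / 2 ^ (n + 1) := div_pos hi (by positivity)
      have := hs i
      exact hps i (by linarith)
    · intro i hi
      have h' : (0 : ℚ) ≤ u i / 2 ^ (n + 1) := by have := hu i; positivity
      exact hps i (by linarith)
    · intro x hx i hti
      rcases List.mem_cons.mp hx with hx | hx
      · subst hx
        rcases (hu i).lt_or_eq with hui | hui
        · have h' : (0 : ℚ) < u i / 2 ^ (n + 1) := div_pos hui (by positivity)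
          have := hs i
          exact hps i (by linarith)
        · have hne : α * (t i : ℚ) ≠ 0 :=
            mul_ne_zero h0.ne' (Int.cast_ne_zero.mpr hti)
          have hge : (0 : ℚ) ≤ u i + α * (t i : ℚ) := hv i
          have hpos : (0 : ℚ) < u i + α * (t i : ℚ) := by
            rcases hge.lt_or_eq with h' | h'
            · exact h'
            · exfalso; apply hne; rw [← hui] at h'; linarith
          exact hpu i hpos
      · exact htouch x hx i hti

/-- If `(p,u) →_{ℚ₊} (q,v)` via `π = α₁t₁ … α_m t_m`, then the sequence
`π' = (α₁/2)t₁ (α₂/4)t₂ … (α_m/2^m)t_m` yields a run `(p,u) →_{ℚ₊} (q,v')` for some `v'`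
with the same underlying path, and every coordinate touched by some transition of `π`
is strictly positive in `v'`. -/
theorem cvass_run_support_cover {Q : Type} {d : ℕ} (M : CVASS Q d) (p q : Q)
    (u v : Fin d → ℚ) (π : List (ℚ × (Fin d → ℤ)))
    (h : Run M (p, u) π (q, v)) :
    ∃ v' : Fin d → ℚ,
      Run M (p, u) (π.mapIdx fun k x => (x.1 / 2 ^ (k + 1), x.2)) (q, v') ∧
      (π.mapIdx fun k x => (x.1 / 2 ^ (k + 1), x.2)).map Prod.snd = π.map Prod.snd ∧
      ∀ x ∈ π, ∀ i, x.2 i ≠ 0 → 0 < v' i := by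
  obtain ⟨v', hrun, _, _, htouch⟩ := run_aux h 0 (fun _ => 0) (fun _ => le_refl 0)
  refine ⟨v', ?_, mapIdx_snd π (fun k a => a / 2 ^ (k + 1)), htouch⟩
  have hu : u = fun i => u i / 2 ^ 0 + (fun _ : Fin d => (0 : ℚ)) i := by
    funext i; simp
  rw [hu]
  exact hrun
end

section
/- Let q be a state, u,v ∈ ℚ₊^d, and π a firing sequence such that: (1) (q,u) reaches (q,v) under ℚ semantics (counters may go negative) via π; (2) for each transition t occurring in π, every coordinate on which t is negative is strictly positive in u; (3) for each transition t occurring in π, every coordinate on which t is positive is strictly positive in v. Then there exists a firing sequence π' with the same Parikh image as π (same total fraction of each transition) such that (q,u) reaches (q,v) under ℚ₊ semantics via π'. -/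
/-- A run with ℚ semantics: counters may go negative along the way. -/
inductive RunQ {Q : Type} {d : ℕ} (M : CVASS Q d) :
    Q × (Fin d → ℚ) → List (ℚ × (Fin d → ℤ)) → Q × (Fin d → ℚ) → Prop where
  | refl (p : Q) (u : Fin d → ℚ) : RunQ M (p, u) [] (p, u)
  | step {p q r : Q} {u w : Fin d → ℚ} {α : ℚ} {t : Fin d → ℤ}
      {rest : List (ℚ × (Fin d → ℤ))}
      (hrule : (p, t, q) ∈ M.rules) (h0 : 0 < α) (h1 : α ≤ 1)
      (hrest : RunQ M (q, fun i => u i + α * (t i : ℚ)) rest (r, w)) :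
      RunQ M (p, u) ((α, t) :: rest) (r, w)

/-- The Parikh image of a firing sequence: the total fraction with which each
transition is fired. -/
def parikh {d : ℕ} (π : List (ℚ × (Fin d → ℤ))) (t : Fin d → ℤ) : ℚ :=
  (π.map fun x => if x.2 = t then x.1 else 0).sum

namespace CVassAux

variable {Q : Type} {d : ℕ}

/-- Effect of a firing sequence on coordinate `i`. -/
def effL (π : List (ℚ × (Fin d → ℤ))) (i : Fin d) : ℚ :=
  (π.map fun x => x.1 * (x.2 i : ℚ)).sum

@[simp] lemma effL_nil (i : Fin d) : effL ([] : List (ℚ × (Fin d → ℤ))) i = 0 := rfl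

@[simp] lemma effL_cons (x : ℚ × (Fin d → ℤ)) (l : List (ℚ × (Fin d → ℤ))) (i : Fin d) :
    effL (x :: l) i = x.1 * (x.2 i : ℚ) + effL l i := by
  simp [effL]

lemma effL_take_add_drop (π : List (ℚ × (Fin d → ℤ))) (j : ℕ) (i : Fin d) :
    effL (π.take j) i + effL (π.drop j) i = effL π i := by
  simp only [effL, List.map_take, List.map_drop]
  exact List.sum_take_add_sum_drop _ _

lemma runQ_effect {M : CVASS Q d} :
    ∀ {a b : Q × (Fin d → ℚ)} {π}, RunQ M a π b → ∀ i, b.2 i = a.2 i + effL π i := by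
  intro a b π h
  induction h with
  | refl p u => intro i; simp
  | step hrule h0 h1 hrest ih =>
      intro i
      have := ih i
      simp only [effL_cons] at *
      linarith [this]

lemma runQ_frac {M : CVASS Q d} :
    ∀ {a b : Q × (Fin d → ℚ)} {π}, RunQ M a π b → ∀ x ∈ π, 0 < x.1 ∧ x.1 ≤ 1 := by
  intro a b π h
  induction h with
  | refl p u => intro x hx; simp at hx
  | step hrule h0 h1 hrest ih =>
      intro x hx
      rcases List.mem_cons.1 hx with h | h
      · subst h; exact ⟨h0, h1⟩
      · exact ih x h

lemma run_append {M : CVASS Q d} :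
    ∀ {a b c : Q × (Fin d → ℚ)} {π₁ π₂}, Run M a π₁ b → Run M b π₂ c →
      Run M a (π₁ ++ π₂) c := by
  intro a b c π₁ π₂ h1
  induction h1 with
  | refl p u hu => intro h2; simpa using h2
  | step hrule h0 h1 hu hv hrest ih =>
      intro h2
      exact Run.step hrule h0 h1 hu hv (ih h2)

lemma run_scale {M : CVASS Q d} {c : ℚ} (hc0 : 0 < c) (hc1 : c ≤ 1) :
    ∀ {a b : Q × (Fin d → ℚ)} {π}, RunQ M a π b →
      ∀ z : Fin d → ℚ, (∀ j, Nonneg (fun i => z i + c * effL (π.take j) i)) →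
        Run M (a.1, z) (scaleSeq c π) (b.1, fun i => z i + c * effL π i) := by
  intro a b π h
  induction h with
  | refl p u =>
      intro z hz
      have hz0 : Nonneg z := by simpa using hz 0
      have he : (fun i => z i + c * effL ([] : List (ℚ × (Fin d → ℤ))) i) = z := by
        funext i; simp
      rw [show scaleSeq c ([] : List (ℚ × (Fin d → ℤ))) = [] from rfl, he]
      exact Run.refl p z hz0
  | @step p q r u w α t rest hrule h0 h1 hrest ih =>
      intro z hz
      have hz0 : Nonneg z := by simpa using hz 0
      have hz1 : Nonneg (fun i => z i + (c * α) * (t i : ℚ)) := by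
        have := hz 1
        simpa [mul_add, mul_assoc] using this
      have hcond : ∀ j, Nonneg (fun i =>
          (fun i => z i + (c * α) * (t i : ℚ)) i + c * effL (rest.take j) i) := by
        intro j i
        have := hz (j + 1) i
        simp only [List.take_succ_cons, effL_cons] at this
        simpa [mul_add, mul_assoc, add_assoc] using this
      have hmain := ih (fun i => z i + (c * α) * (t i : ℚ)) hcond
      have hfin : (fun i => (fun i => z i + (c * α) * (t i : ℚ)) i + c * effL rest i)
          = (fun i => z i + c * effL (((α, t) :: rest)) i) := by
        funext i; simp [effL_cons]; ring
      rw [hfin] at hmain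
      have hca : c * α ≤ 1 := by
        have := mul_le_mul hc1 h1 h0.le zero_le_one
        simpa using this
      exact Run.step hrule (mul_pos hc0 h0) hca hz0 hz1 hmain

lemma parikh_append (a b : List (ℚ × (Fin d → ℤ))) (t : Fin d → ℤ) :
    parikh (a ++ b) t = parikh a t + parikh b t := by
  simp [parikh]

lemma parikh_scale (c : ℚ) (π : List (ℚ × (Fin d → ℤ))) (t : Fin d → ℤ) :
    parikh (scaleSeq c π) t = c * parikh π t := by
  induction π with
  | nil => simp [parikh, scaleSeq]
  | cons x l ih =>
      have hsc : scaleSeq c (x :: l) = (c * x.1, x.2) :: scaleSeq c l := rfl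
      rw [hsc]
      simp only [parikh, List.map_cons, List.sum_cons] at ih ⊢
      by_cases h : x.2 = t <;> simp [h, mul_add, ih]

lemma parikh_join_replicate (k : ℕ) (σ : List (ℚ × (Fin d → ℤ))) (t : Fin d → ℤ) :
    parikh ((List.replicate k σ).flatten) t = (k : ℚ) * parikh σ t := by
  induction k with
  | zero => simp [parikh]
  | succ n ih =>
      rw [List.replicate_succ, List.flatten_cons, parikh_append, ih]
      push_cast; ring

lemma list_sum_nonpos (l : List ℚ) (h : ∀ x ∈ l, x ≤ 0) : l.sum ≤ 0 := by
  induction l with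
  | nil => simp
  | cons a t ih =>
      simp only [List.sum_cons]
      have h1 := h a (by simp)
      have h2 := ih fun x hx => h x (by simp [hx])
      linarith

lemma abs_sum_take_le (l : List ℚ) (j : ℕ) :
    |((l.take j).sum)| ≤ (l.map fun x => |x|).sum := by
  have h1 : |((l.take j).sum)| ≤ ((l.take j).map fun x => |x|).sum := by
    induction (l.take j) with
    | nil => simp
    | cons x xs ih =>
        simp only [List.sum_cons, List.map_cons]
        exact (abs_add_le _ _).trans (by linarith)
  refine h1.trans ?_
  rw [List.map_take]
  have := List.sum_take_add_sum_drop (l.map fun x => |x|) j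
  have h2 : 0 ≤ ((l.map fun x => |x|).drop j).sum := by
    apply List.sum_nonneg
    intro x hx
    have := List.mem_of_mem_drop hx
    rcases List.mem_map.1 this with ⟨y, _, rfl⟩
    exact abs_nonneg y
  linarith

end CVassAux

open CVassAux

/-- If `(q,u)` reaches `(q,v)` under ℚ semantics via `π`, every coordinate
on which some transition of `π` is negative is positive in `u`, and every coordinate on
which some transition of `π` is positive is positive in `v`, then there is a firing
sequence `π'` with the same Parikh image as `π` realizing the run under ℚ₊ semantics. -/
theorem cvass_qrun_to_nonneg_run {Q : Type} {d : ℕ} (M : CVASS Q d) (q : Q)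
    (u v : Fin d → ℚ) (π : List (ℚ × (Fin d → ℤ)))
    (hu : Nonneg u) (hv : Nonneg v)
    (hrun : RunQ M (q, u) π (q, v))
    (hneg : ∀ x ∈ π, ∀ i, x.2 i < 0 → 0 < u i)
    (hpos : ∀ x ∈ π, ∀ i, 0 < x.2 i → 0 < v i) :
    ∃ π' : List (ℚ × (Fin d → ℤ)),
      (∀ t, parikh π' t = parikh π t) ∧ Run M (q, u) π' (q, v) := by
  classical
  have heff : ∀ i, v i = u i + effL π i := by
    have := runQ_effect hrun
    simpa using this
  have hfrac : ∀ x ∈ π, 0 < x.1 ∧ x.1 ≤ 1 := runQ_frac hrun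
  set B : ℚ := (π.map fun x => ∑ i, |x.1 * ((x.2 i : ℤ) : ℚ)|).sum with hBdef
  have hB0 : 0 ≤ B := by
    apply List.sum_nonneg
    intro x hx
    rcases List.mem_map.1 hx with ⟨y, _, rfl⟩
    exact Finset.sum_nonneg fun i _ => abs_nonneg _
  have hBe : ∀ (j : ℕ) (i : Fin d), |effL (π.take j) i| ≤ B := by
    intro j i
    have h1 := abs_sum_take_le (π.map fun x => x.1 * ((x.2 i : ℤ) : ℚ)) j
    have h2 : effL (π.take j) i
        = ((π.map fun x => x.1 * ((x.2 i : ℤ) : ℚ)).take j).sum := by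
      simp [effL, List.map_take]
    rw [h2]
    refine h1.trans ?_
    rw [List.map_map]
    apply List.sum_le_sum
    intro x _
    have : |x.1 * ((x.2 i : ℤ) : ℚ)| ≤ ∑ j, |x.1 * ((x.2 j : ℤ) : ℚ)| :=
      Finset.single_le_sum (f := fun j => |x.1 * ((x.2 j : ℤ) : ℚ)|)
        (fun j _ => abs_nonneg _) (Finset.mem_univ i)
    simpa using this
  set N0 : ℚ := ∑ i, max (B / min (u i) (v i)) 0 with hN0def
  set n : ℕ := ⌈N0⌉₊ + 1 with hndef
  have hn1 : (1 : ℚ) ≤ (n : ℚ) := by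
    have : (1 : ℕ) ≤ n := Nat.succ_le_succ (Nat.zero_le _)
    exact_mod_cast this
  have hn0 : 0 < (n : ℚ) := lt_of_lt_of_le one_pos hn1
  have hnne : (n : ℚ) ≠ 0 := ne_of_gt hn0
  have hnN0 : N0 ≤ (n : ℚ) := by
    refine (Nat.le_ceil N0).trans ?_
    exact_mod_cast Nat.le_succ _
  have hnB : ∀ i, 0 < u i → 0 < v i → B ≤ (n : ℚ) * min (u i) (v i) := by
    intro i hui hvi
    have hm : 0 < min (u i) (v i) := lt_min hui hvi
    have h1 : max (B / min (u i) (v i)) 0 ≤ N0 := by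
      rw [hN0def]
      exact Finset.single_le_sum (f := fun i => max (B / min (u i) (v i)) 0)
        (fun j _ => le_max_right _ 0) (Finset.mem_univ i)
    have h2 : B / min (u i) (v i) ≤ (n : ℚ) :=
      (le_max_left _ 0).trans (h1.trans hnN0)
    exact (div_le_iff₀ hm).1 h2
  have core : ∀ (j : ℕ), j < n → ∀ (jj : ℕ) (i : Fin d),
      0 ≤ ((n : ℚ) - j) * u i + (j : ℚ) * v i + effL (π.take jj) i := by
    intro j hj jj i
    have hjn : (j : ℚ) + 1 ≤ (n : ℚ) := by exact_mod_cast hj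
    have hnj : 0 ≤ (n : ℚ) - j := by linarith
    have hju : (0 : ℚ) ≤ (j : ℚ) := Nat.cast_nonneg j
    have htd := effL_take_add_drop π jj i
    by_cases hall : ∀ x ∈ π, (0 : ℤ) ≤ x.2 i
    · have he : 0 ≤ effL (π.take jj) i := by
        apply List.sum_nonneg
        intro a ha
        rcases List.mem_map.1 ha with ⟨x, hxmem, rfl⟩
        have hxπ : x ∈ π := List.mem_of_mem_take hxmem
        have h1 := (hfrac x hxπ).1
        have h2 : (0 : ℚ) ≤ ((x.2 i : ℤ) : ℚ) := by exact_mod_cast hall x hxπ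
        exact mul_nonneg h1.le h2
      linarith [mul_nonneg hnj (hu i), mul_nonneg hju (hv i)]
    · push_neg at hall
      obtain ⟨x0, hx0π, hx0⟩ := hall
      have hui : 0 < u i := hneg x0 hx0π i hx0
      by_cases hle : ∀ x ∈ π, x.2 i ≤ 0
      · have hdrop : effL (π.drop jj) i ≤ 0 := by
          apply list_sum_nonpos
          intro a ha
          rcases List.mem_map.1 ha with ⟨x, hxmem, rfl⟩
          have hxπ : x ∈ π := List.mem_of_mem_drop hxmem
          have h1 := (hfrac x hxπ).1
          have h2 : ((x.2 i : ℤ) : ℚ) ≤ 0 := by exact_mod_cast hle x hxπ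
          exact mul_nonpos_of_nonneg_of_nonpos h1.le h2
        have k1 : ((n : ℚ) - (j : ℚ)) * u i = ((n : ℚ) - j - 1) * u i + u i := by ring
        have k2 : (j : ℚ) * v i = ((j : ℚ) + 1) * v i - v i := by ring
        have k3 : 0 ≤ ((n : ℚ) - j - 1) * u i :=
          mul_nonneg (by linarith) (hu i)
        have k4 : 0 ≤ ((j : ℚ) + 1) * v i :=
          mul_nonneg (by linarith) (hv i)
        linarith [heff i]
      · push_neg at hle
        obtain ⟨y, hyπ, hy⟩ := hle
        have hvi : 0 < v i := hpos y hyπ i hy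
        have hB := hnB i hui hvi
        have he : -B ≤ effL (π.take jj) i := (abs_le.1 (hBe jj i)).1
        have k1 : ((n : ℚ) - j) * min (u i) (v i) ≤ ((n : ℚ) - j) * u i :=
          mul_le_mul_of_nonneg_left (min_le_left _ _) hnj
        have k2 : (j : ℚ) * min (u i) (v i) ≤ (j : ℚ) * v i :=
          mul_le_mul_of_nonneg_left (min_le_right _ _) hju
        have k3 : ((n : ℚ) - j) * min (u i) (v i) + (j : ℚ) * min (u i) (v i)
            = (n : ℚ) * min (u i) (v i) := by ring
        linarith
  set c : ℚ := 1 / (n : ℚ) with hcdef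
  have hc0 : 0 < c := by rw [hcdef]; positivity
  have hc1 : c ≤ 1 := by rw [hcdef, div_le_one hn0]; exact hn1
  set σ : List (ℚ × (Fin d → ℤ)) := scaleSeq c π with hσdef
  set vecAt : ℕ → Fin d → ℚ := fun j i => u i + ((j : ℚ) / n) * effL π i with hvecdef
  have hE : ∀ i, effL π i = v i - u i := fun i => by linarith [heff i]
  have hscale : ∀ j : ℕ, j < n → Run M (q, vecAt j) σ (q, vecAt (j + 1)) := by
    intro j hj
    have hcond : ∀ jj, Nonneg (fun i => vecAt j i + c * effL (π.take jj) i) := by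
      intro jj i
      have hcore := core j hj jj i
      have key : vecAt j i + c * effL (π.take jj) i
          = c * (((n : ℚ) - j) * u i + (j : ℚ) * v i + effL (π.take jj) i) := by
        rw [hvecdef, hcdef]
        simp only
        rw [hE i]
        field_simp
        ring
      simp only [key]
      exact mul_nonneg hc0.le hcore
    have hmain := run_scale hc0 hc1 hrun (vecAt j) hcond
    have hend : (fun i => vecAt j i + c * effL π i) = vecAt (j + 1) := by
      funext i
      rw [hvecdef, hcdef]
      simp only
      push_cast
      field_simp
      ring
    rw [← hend]
    exact hmain
  have hrep : ∀ (k jx : ℕ), jx + k = n →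
      Run M (q, vecAt jx) ((List.replicate k σ).flatten) (q, v) := by
    intro k
    induction k with
    | zero =>
        intro jx hjx
        have hveq : vecAt jx = v := by
          funext i
          rw [hvecdef]
          simp only
          rw [hE i]
          have hjq : (jx : ℚ) = (n : ℚ) := by exact_mod_cast (by omega : jx = n)
          rw [hjq]
          field_simp
          ring
        rw [hveq]
        exact Run.refl q v hv
    | succ k ih =>
        intro jx hjx
        have h1 : Run M (q, vecAt jx) σ (q, vecAt (jx + 1)) := hscale jx (by omega)
        have h2 := ih (jx + 1) (by omega)
        have h3 := run_append h1 h2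
        rw [List.replicate_succ, List.flatten_cons]
        exact h3
  have hstart : vecAt 0 = u := by
    funext i
    rw [hvecdef]
    simp
  refine ⟨(List.replicate n σ).flatten, ?_, ?_⟩
  · intro t
    rw [parikh_join_replicate, hσdef, parikh_scale, hcdef]
    field_simp
  · have := hrep n 0 (by omega)
    rwa [hstart] at this
end

section
/- Let K ⊆ Γ* be a letter-uniform language over a finite alphabet Γ ⊆ ℤ^d (every word of K uses exactly the letters of Γ), and let u ∈ ℚ₊^d. Then there exists w ∈ K and v ∈ ℚ₊^d with u →_{ℚ₊}^w v if and only if there is a linear order < on Γ such that u is <-admissible and some word of K is <-compatible. Here u is <-admissible if for every γ ∈ Γ and every coordinate i where γ is negative, either u(i) > 0 or some η < γ has η(i) > 0; and w is <-compatible if for each occurrence of a letter γ in w, every coordinate where γ is negative was already incremented by u or by some earlier-occurring letter type. -/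
/-- `FireNN u w v`: the word `w` of integer vectors can be fired from `u` with fractions
in `(0,1]`, keeping all intermediate counter vectors componentwise nonnegative, ending
at `v` (continuous ℚ₊ firing of a word). -/
inductive FireNN {d : ℕ} : (Fin d → ℚ) → List (Fin d → ℤ) → (Fin d → ℚ) → Prop where
  | nil (u : Fin d → ℚ) (hu : ∀ i, 0 ≤ u i) : FireNN u [] u
  | cons {u v : Fin d → ℚ} {t : Fin d → ℤ} {rest : List (Fin d → ℤ)} {α : ℚ}
      (h0 : 0 < α) (h1 : α ≤ 1) (hu : ∀ i, 0 ≤ u i)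
      (hnext : ∀ i, 0 ≤ u i + α * (t i : ℚ))
      (hrest : FireNN (fun i => u i + α * (t i : ℚ)) rest v) :
      FireNN u (t :: rest) v

/-- `η` occurs strictly before `γ` in the list `L` (which represents a linear order on
the alphabet, listed in increasing order). -/
def Before {d : ℕ} (L : List (Fin d → ℤ)) (η γ : Fin d → ℤ) : Prop :=
  η ∈ L ∧ γ ∈ L ∧ L.idxOf η < L.idxOf γ

/-- `u` is `<`-admissible (for the order given by `L`): for every letter `γ` and every
coordinate `i` where `γ` is negative, either `u i > 0` or some `<`-smaller letter `η`
is positive on `i`. -/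
def Admissible {d : ℕ} (L : List (Fin d → ℤ)) (u : Fin d → ℚ) : Prop :=
  ∀ γ ∈ L, ∀ i, γ i < 0 → 0 < u i ∨ ∃ η, Before L η γ ∧ 0 < η i

/-- `w` is `<`-compatible (for the order `L = [γ₁ < … < γ_k]`): `w` uses only letters
of `L`, every letter of `L` occurs in `w`, and every occurrence of a letter is preceded
by occurrences of all strictly smaller letters; i.e. `w` lies in the regular language
`γ₁γ₁*γ₂(γ₁+γ₂)*γ₃ … γ_k(γ₁+…+γ_k)*`. -/
def Compatible {d : ℕ} (L : List (Fin d → ℤ)) (w : List (Fin d → ℤ)) : Prop :=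
  (∀ t ∈ w, t ∈ L) ∧ (∀ γ ∈ L, γ ∈ w) ∧
    ∀ p : Fin w.length, ∀ η ∈ L, L.idxOf η < L.idxOf (w.get p) →
      ∃ p' : Fin w.length, (p' : ℕ) < (p : ℕ) ∧ w.get p' = η

/-!
Both sides are equivalent to one condition on a single word `w` (`NegSuppCovered`): every
coordinate on which an occurrence of a letter is negative is positive in `u` or in some earlier
letter. It is necessary because a counter that is zero and has never been incremented cannot be
decremented by a positive fraction. It is sufficient because each letter can be fired with a
fraction so small that every positive counter stays positive: the support of the counter vector
then only grows, absorbing the positive support of each fired letter. The order on `Γ` is the order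
of first occurrences in `w`; conversely, an admissible order and a compatible word give exactly
this condition.
-/

namespace List

variable {α : Type*} [BEq α] [LawfulBEq α]

theorem idxOf_le_of_getElem_eq {l : List α} {a : α} {i : ℕ} (hi : i < l.length)
    (h : l[i] = a) : l.idxOf a ≤ i := by
  by_contra! hlt
  simpa [h] using not_of_lt_findIdx hlt

theorem idxOf_lt_of_mem_take {l : List α} {a : α} {n : ℕ} (h : a ∈ l.take n) :
    l.idxOf a < n := by
  obtain ⟨j, hj, rfl⟩ := mem_take_iff_getElem.1 h
  exact (idxOf_le_of_getElem_eq _ rfl).trans_lt (lt_min_iff.1 hj).1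

theorem idxOf_lt_idxOf_iff_of_pairwise {β : Type*} [LinearOrder β] {l : List α} {f : α → β}
    (hl : l.Pairwise (f · ≤ f ·)) (hf : Set.InjOn f {a | a ∈ l}) {a b : α} (ha : a ∈ l)
    (hb : b ∈ l) : l.idxOf a < l.idxOf b ↔ f a < f b := by
  have mono : ∀ x ∈ l, ∀ y ∈ l, l.idxOf x < l.idxOf y → f x ≤ f y := by
    intro x hx y hy hxy
    simpa only [getElem_idxOf] using pairwise_iff_getElem.1 hl _ _
      (idxOf_lt_length_iff.2 hx) (idxOf_lt_length_iff.2 hy) hxy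
  constructor
  · intro hab
    refine (mono a ha b hb hab).lt_of_ne fun he => ?_
    rw [hf ha hb he] at hab
    exact hab.false
  · intro hab
    by_contra! hba
    rcases hba.lt_or_eq with hba | hba
    · exact (mono b hb a ha hba).not_gt hab
    · rw [(idxOf_inj hb).1 hba] at hab
      exact hab.false

end List

theorem Finset.exists_nodup_list_idxOf_lt_iff {α β : Type*} [DecidableEq α] [LinearOrder β]
    (s : Finset α) {f : α → β} (hf : Set.InjOn f s) :
    ∃ l : List α, l.Nodup ∧ l.toFinset = s ∧
      ∀ a ∈ s, ∀ b ∈ s, (l.idxOf a < l.idxOf b ↔ f a < f b) := by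
  set l := s.toList.mergeSort (fun a b => decide (f a ≤ f b))
  have hperm : l.Perm s.toList := List.mergeSort_perm _ _
  have hmem : ∀ a, a ∈ l ↔ a ∈ s := fun a => by simp [hperm.mem_iff]
  have hsorted : l.Pairwise (f · ≤ f ·) := by
    simpa using List.pairwise_mergeSort (le := fun a b => decide (f a ≤ f b))
      (fun a b c hab hbc => by simp only [decide_eq_true_eq] at *; exact hab.trans hbc)
      (fun a b => by simpa using le_total (f a) (f b)) s.toList
  refine ⟨l, hperm.nodup_iff.2 s.nodup_toList, ?_, fun a ha b hb => ?_⟩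
  · ext a
    simp [hmem]
  · exact List.idxOf_lt_idxOf_iff_of_pairwise hsorted (fun x hx y hy => hf ((hmem x).1 hx)
      ((hmem y).1 hy)) ((hmem a).2 ha) ((hmem b).2 hb)

section Covered

variable {ι : Type*}

def NegSuppCovered (S : Set ι) (w : List (ι → ℤ)) : Prop :=
  ∀ p (hp : p < w.length), ∀ i, w[p] i < 0 → i ∈ S ∨ ∃ η ∈ w.take p, 0 < η i

theorem NegSuppCovered.mono {S T : Set ι} {w : List (ι → ℤ)} (hw : NegSuppCovered S w)
    (hST : S ⊆ T) : NegSuppCovered T w :=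
  fun p hp i hi => (hw p hp i hi).imp_left (@hST i)

theorem negSuppCovered_cons_iff {S : Set ι} {t : ι → ℤ} {w : List (ι → ℤ)} :
    NegSuppCovered S (t :: w) ↔
      (∀ i, t i < 0 → i ∈ S) ∧ NegSuppCovered (S ∪ {i | 0 < t i}) w := by
  constructor
  · intro h
    refine ⟨fun i hi => by simpa using h 0 (by simp) i hi, fun p hp i hi => ?_⟩
    rcases h (p + 1) (by simpa using hp) i (by simpa using hi) with hS | ⟨η, hη, hηi⟩
    · exact Or.inl (Or.inl hS)
    · rcases List.mem_cons.1 (by simpa using hη) with rfl | hη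
      · exact Or.inl (Or.inr hηi)
      · exact Or.inr ⟨η, hη, hηi⟩
  · rintro ⟨ht, hw⟩ p hp i hi
    cases p with
    | zero => exact Or.inl (ht i (by simpa using hi))
    | succ p =>
      rcases hw p (by simpa using hp) i (by simpa using hi) with (hS | hti) | ⟨η, hη, hηi⟩
      · exact Or.inl hS
      · exact Or.inr ⟨t, by simp, hti⟩
      · exact Or.inr ⟨η, by simp [hη], hηi⟩

end Covered

theorem exists_small_step {ι : Type*} [Finite ι] {u : ι → ℚ} {t : ι → ℤ}
    (hu : ∀ i, 0 ≤ u i) (ht : ∀ i, t i < 0 → 0 < u i) :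
    ∃ α : ℚ, 0 < α ∧ α ≤ 1 ∧
      ∀ i, 0 ≤ u i + α * t i ∧ (0 < u i ∨ 0 < t i → 0 < u i + α * t i) := by
  have hpos : ∀ᶠ α in nhdsWithin (0 : ℚ) (Set.Ioi 0), ∀ i, 0 < u i → 0 < u i + α * t i := by
    refine Filter.eventually_all.2 fun i => ?_
    by_cases hui : 0 < u i
    · have hlim : Filter.Tendsto (fun α : ℚ => u i + α * t i) (nhds 0) (nhds (u i)) := by
        simpa using ((continuous_id.mul continuous_const).const_add (u i)).tendsto (0 : ℚ)
      exact nhdsWithin_le_nhds ((hlim.eventually (lt_mem_nhds hui)).mono fun _ h _ => h)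
    · exact Filter.Eventually.of_forall fun _ h => (hui h).elim
  obtain ⟨α, hα, hα0, hα1⟩ := (hpos.and (eventually_mem_nhdsWithin.and
    (nhdsWithin_le_nhds (eventually_le_nhds zero_lt_one)))).exists
  refine ⟨α, hα0, hα1, fun i => ?_⟩
  by_cases hui : 0 < u i
  · exact ⟨(hα i hui).le, fun _ => hα i hui⟩
  · have hu0 : u i = 0 := le_antisymm (not_lt.1 hui) (hu i)
    have hti : (0 : ℚ) ≤ t i := by exact_mod_cast not_lt.1 (mt (ht i) hui)
    refine ⟨by simpa [hu0] using mul_nonneg hα0.le hti, fun h => ?_⟩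
    have hti' : (0 : ℚ) < t i := by exact_mod_cast h.resolve_left hui
    simpa [hu0] using mul_pos hα0 hti'

section Firing

variable {d : ℕ}

theorem FireNN.negSuppCovered {u v : Fin d → ℚ} {w : List (Fin d → ℤ)} (h : FireNN u w v) :
    NegSuppCovered {i | 0 < u i} w := by
  induction h with
  | nil => exact fun p hp => absurd hp (by simp)
  | @cons u v t w α hα0 _ hu hnext _ ih =>
    refine negSuppCovered_cons_iff.2 ⟨fun i hti => ?_, ih.mono fun i hi => ?_⟩
    · have : α * t i < 0 := mul_neg_of_pos_of_neg hα0 (by exact_mod_cast hti)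
      show 0 < u i
      linarith [hnext i]
    · have hi : 0 < u i + α * t i := hi
      rcases le_or_gt (t i) 0 with hti | hti
      · have : α * t i ≤ 0 := mul_nonpos_of_nonneg_of_nonpos hα0.le (by exact_mod_cast hti)
        exact Or.inl (show 0 < u i by linarith)
      · exact Or.inr hti

theorem NegSuppCovered.exists_fireNN {u : Fin d → ℚ} {w : List (Fin d → ℤ)}
    (hu : ∀ i, 0 ≤ u i) (h : NegSuppCovered {i | 0 < u i} w) : ∃ v, FireNN u w v := by
  induction w generalizing u with
  | nil => exact ⟨u, .nil u hu⟩
  | cons t w ih =>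
    obtain ⟨ht, hw⟩ := negSuppCovered_cons_iff.1 h
    obtain ⟨α, hα0, hα1, hstep⟩ := exists_small_step hu ht
    obtain ⟨v, hv⟩ := ih (u := fun i => u i + α * t i) (fun i => (hstep i).1)
      (hw.mono fun i hi => (hstep i).2 hi)
    exact ⟨v, .cons hα0 hα1 hu (fun i => (hstep i).1) hv⟩

theorem Compatible.negSuppCovered {L w : List (Fin d → ℤ)} {u : Fin d → ℚ}
    (hw : Compatible L w) (hu : Admissible L u) : NegSuppCovered {i | 0 < u i} w := by
  intro p hp i hi
  rcases hu w[p] (hw.1 _ (List.getElem_mem hp)) i hi with hui | ⟨η, ⟨hηL, -, hlt⟩, hηi⟩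
  · exact Or.inl hui
  · obtain ⟨p', hp'p, hp'⟩ := hw.2.2 ⟨p, hp⟩ η hηL hlt
    exact Or.inr ⟨η, List.mem_take_iff_getElem.2 ⟨p', lt_min hp'p p'.isLt, by simpa using hp'⟩, hηi⟩

theorem NegSuppCovered.exists_admissible_compatible {Γ : Finset (Fin d → ℤ)}
    {w : List (Fin d → ℤ)} {u : Fin d → ℚ} (hwΓ : ∀ t ∈ w, t ∈ Γ) (hΓw : ∀ γ ∈ Γ, γ ∈ w)
    (h : NegSuppCovered {i | 0 < u i} w) :
    ∃ L : List (Fin d → ℤ), L.Nodup ∧ L.toFinset = Γ ∧ Admissible L u ∧ Compatible L w := by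
  obtain ⟨L, hnd, hLΓ, hidx⟩ := Γ.exists_nodup_list_idxOf_lt_iff (f := w.idxOf)
    fun a ha b _ hab => (List.idxOf_inj (hΓw a ha)).1 hab
  have hmem : ∀ a, a ∈ L ↔ a ∈ Γ := fun a => by simp [← hLΓ]
  refine ⟨L, hnd, hLΓ, fun γ hγ i hi => ?_, fun t ht => (hmem t).2 (hwΓ t ht),
    fun γ hγ => hΓw γ ((hmem γ).1 hγ), fun p η hη hlt => ?_⟩
  · have hγΓ := (hmem γ).1 hγ
    rcases h _ (List.idxOf_lt_length_iff.2 (hΓw γ hγΓ)) i (by rwa [List.getElem_idxOf])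
      with hui | ⟨η, hη, hηi⟩
    · exact Or.inl hui
    · have hηΓ := hwΓ η (List.mem_of_mem_take hη)
      exact Or.inr ⟨η, ⟨(hmem η).2 hηΓ, hγ,
        (hidx η hηΓ γ hγΓ).2 (List.idxOf_lt_of_mem_take hη)⟩, hηi⟩
  · have hηΓ := (hmem η).1 hη
    have hηw := List.idxOf_lt_length_iff.2 (hΓw η hηΓ)
    refine ⟨⟨w.idxOf η, hηw⟩, ?_, by simp [List.getElem_idxOf]⟩
    exact ((hidx η hηΓ _ (hwΓ _ (List.get_mem w p))).1 hlt).trans_le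
      (List.idxOf_le_of_getElem_eq p.isLt rfl)

theorem exists_fireNN_iff_exists_admissible_compatible {Γ : Finset (Fin d → ℤ)}
    {w : List (Fin d → ℤ)} {u : Fin d → ℚ} (hu : ∀ i, 0 ≤ u i) (hwΓ : ∀ t ∈ w, t ∈ Γ)
    (hΓw : ∀ γ ∈ Γ, γ ∈ w) :
    (∃ v, FireNN u w v) ↔
      ∃ L : List (Fin d → ℤ), L.Nodup ∧ L.toFinset = Γ ∧ Admissible L u ∧ Compatible L w :=
  ⟨fun ⟨_, hv⟩ => hv.negSuppCovered.exists_admissible_compatible hwΓ hΓw,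
    fun ⟨_, _, _, hL, hwL⟩ => (hwL.negSuppCovered hL).exists_fireNN hu⟩

end Firing

/-- For a letter-uniform language `K` over a finite alphabet `Γ ⊆ ℤ^d`
(every word of `K` uses exactly the letters of `Γ`) and `u ∈ ℚ₊^d`: some word of `K`
can be fired from `u` under ℚ₊ semantics iff there is a linear order on `Γ` (given as a
duplicate-free enumeration `L`) such that `u` is `<`-admissible and some word of `K`
is `<`-compatible. -/
theorem letter_uniform_admissibility {d : ℕ} (Γ : Finset (Fin d → ℤ))
    (K : Set (List (Fin d → ℤ)))
    (hK : ∀ w ∈ K, (∀ t ∈ w, t ∈ Γ) ∧ (∀ γ ∈ Γ, γ ∈ w))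
    (u : Fin d → ℚ) (hu : ∀ i, 0 ≤ u i) :
    (∃ w ∈ K, ∃ v, FireNN u w v) ↔
      ∃ L : List (Fin d → ℤ), L.Nodup ∧ L.toFinset = Γ ∧
        Admissible L u ∧ ∃ w ∈ K, Compatible L w := by
  have key w (hw : w ∈ K) :=
    exists_fireNN_iff_exists_admissible_compatible hu (hK w hw).1 (hK w hw).2
  constructor
  · rintro ⟨w, hw, hfire⟩
    obtain ⟨L, hnd, hLΓ, hL, hwL⟩ := (key w hw).1 hfire
    exact ⟨L, hnd, hLΓ, hL, w, hw, hwL⟩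
  · rintro ⟨L, hnd, hLΓ, hL, w, hw, hwL⟩
    exact ⟨w, hw, (key w hw).2 ⟨L, hnd, hLΓ, hL, hwL⟩⟩
end

section
/- For every m ≥ 1 there exists a pushdown automaton P_m with O(log m) states and stack symbols, and configurations C, C' of P_m, such that there is exactly one run from C to C', and that run has length exactly m. Moreover, the maximum stack height along this run is O(log m). -/
/-- A stack operation: push a symbol, pop a symbol, or do nothing. -/
inductive StackOp (S : Type) where
  | push : S → StackOp S
  | pop : S → StackOp S
  | nop : StackOp S

/-- A pushdown automaton: a set of edges between states labeled by stack operations. -/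
structure PDA (Q S : Type) where
  edges : Set (Q × StackOp S × Q)

/-- One step of the PDA on configurations (state, stack content). -/
def PDA.Step {Q S : Type} (P : PDA Q S) (c c' : Q × List S) : Prop :=
  ∃ op : StackOp S, (c.1, op, c'.1) ∈ P.edges ∧
    match op with
    | .push a => c'.2 = a :: c.2
    | .pop a => c.2 = a :: c'.2
    | .nop => c'.2 = c.2

/-- A run from `C` to `C'`, given as the list of visited configurations. -/
def PDA.IsRun {Q S : Type} (P : PDA Q S) (C C' : Q × List S)
    (l : List (Q × List S)) : Prop :=
  l.head? = some C ∧ l.getLast? = some C' ∧ l.Chain' P.Step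

/-! A deterministic pushdown automaton with `O(K)` states and stack symbols performs a depth-first
traversal of the complete binary tree of height `K`, recording on the stack the path from the root;
the traversal has `5 · 2^K - 4` steps and stack height at most `K`. Its last configuration has no
successor, so by determinism the run from any configuration of the traversal to the last one is
unique. Choosing `K = log₂ m + 1` and starting `m` steps before the end gives the theorem. -/

theorem List.IsChain.eq_of_rightUnique {α : Type*} {R : α → α → Prop}
    (hR : Relator.RightUnique R) {z : α} (hz : ∀ c, ¬ R z c) :
    ∀ {l l' : List α}, l.IsChain R → l'.IsChain R → l.head? = l'.head? →
      l.getLast? = some z → l'.getLast? = some z → l = l'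
  | [], [], _, _, _, _, _ => rfl
  | [], _ :: _, _, _, h, _, _ | _ :: _, [], _, _, h, _, _ => by simp at h
  | [a], [a'], _, _, h, _, _ => by simpa using h
  | [a], a' :: b' :: _, _, hl', h, hz₁, _ => by
    simp only [List.head?_cons, Option.some.injEq, List.getLast?_singleton] at h hz₁
    subst h hz₁
    exact absurd (List.isChain_cons_cons.mp hl').1 (hz _)
  | a :: b :: _, [a'], hl, _, h, _, hz₂ => by
    simp only [List.head?_cons, Option.some.injEq, List.getLast?_singleton] at h hz₂
    subst h hz₂
    exact absurd (List.isChain_cons_cons.mp hl).1 (hz _)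
  | a :: b :: t, a' :: b' :: t', hl, hl', h, hz₁, hz₂ => by
    simp only [List.head?_cons, Option.some.injEq, List.getLast?_cons_cons] at h hz₁ hz₂
    subst h
    rw [List.isChain_cons_cons] at hl hl'
    obtain rfl := hR hl.1 hl'.1
    rw [eq_of_rightUnique hR hz hl.2 hl'.2 rfl hz₁ hz₂]

namespace PDA

variable {Q S : Type} {P : PDA Q S}

def Deterministic (P : PDA Q S) : Prop :=
  Relator.RightUnique P.Step

theorem deterministic_of_edges
    (h : ∀ e₁ ∈ P.edges, ∀ e₂ ∈ P.edges, e₁.1 = e₂.1 →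
      e₁.2 = e₂.2 ∨ ∃ a b, a ≠ b ∧ e₁.2.1 = .pop a ∧ e₂.2.1 = .pop b) :
    P.Deterministic := by
  rintro ⟨q, s⟩ ⟨q₁, s₁⟩ ⟨q₂, s₂⟩ ⟨op₁, he₁, hs₁⟩ ⟨op₂, he₂, hs₂⟩
  rcases h _ he₁ _ he₂ rfl with heq | ⟨a, b, hab, rfl, rfl⟩
  · obtain ⟨rfl, rfl⟩ := Prod.mk.inj heq
    cases op₁ <;> simp_all
  · exact absurd (List.cons.inj (hs₁.symm.trans hs₂)).1 hab

theorem step_push {q q' : Q} {a : S} (h : (q, .push a, q') ∈ P.edges) (s : List S) :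
    P.Step (q, s) (q', a :: s) :=
  ⟨_, h, rfl⟩

theorem step_pop {q q' : Q} {a : S} (h : (q, .pop a, q') ∈ P.edges) (s : List S) :
    P.Step (q, a :: s) (q', s) :=
  ⟨_, h, rfl⟩

theorem step_nop {q q' : Q} (h : (q, .nop, q') ∈ P.edges) (s : List S) :
    P.Step (q, s) (q', s) :=
  ⟨_, h, rfl⟩

theorem isRun_singleton (c : Q × List S) : P.IsRun c c [c] :=
  ⟨rfl, rfl, List.isChain_singleton c⟩

namespace IsRun

variable {C D D' E : Q × List S} {l l' : List (Q × List S)}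

theorem append (h : P.IsRun C D l) (h' : P.IsRun D' E l') (hD : P.Step D D') :
    P.IsRun C E (l ++ l') := by
  obtain ⟨hC, hD₁, hl⟩ := h
  obtain ⟨hD₂, hE, hl'⟩ := h'
  have hne : l' ≠ [] := by rintro rfl; simp at hD₂
  refine ⟨by rw [List.head?_append, hC]; rfl, by rwa [List.getLast?_append_of_ne_nil _ hne], ?_⟩
  exact List.isChain_append.mpr ⟨hl, hl', fun x hx y hy => by simp_all⟩

theorem drop (h : P.IsRun C D l) {n : ℕ} (hn : n < l.length) :
    P.IsRun l[n] D (l.drop n) := by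
  obtain ⟨-, hD, hl⟩ := h
  refine ⟨by simp [List.head?_drop, hn], ?_, hl.drop n⟩
  rwa [List.getLast?_drop, if_neg (by omega)]

theorem eq (hP : P.Deterministic) (hD : ∀ c, ¬ P.Step D c)
    (h : P.IsRun C D l) (h' : P.IsRun C D l') : l = l' :=
  List.IsChain.eq_of_rightUnique hP hD h.2.2 h'.2.2 (h.1.trans h'.1.symm) h.2.1 h'.2.1

end IsRun

end PDA

namespace BinaryCounter

open PDA

abbrev State (K : ℕ) := Fin (3 * K + 3)
abbrev Symbol (K : ℕ) := Fin (2 * K + 2)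

/- Levels `j ≤ K` of the tree are encoded in blocks of three states and two symbols; the
indices are clamped at `K` only so that the definitions are total. -/

def down (K j : ℕ) : State K := ⟨3 * min j K, by omega⟩
def up (K j : ℕ) : State K := ⟨3 * min j K + 1, by omega⟩
def turn (K j : ℕ) : State K := ⟨3 * min j K + 2, by omega⟩
def left (K j : ℕ) : Symbol K := ⟨2 * min j K, by omega⟩
def right (K j : ℕ) : Symbol K := ⟨2 * min j K + 1, by omega⟩

/-- In state `down j` (resp. `up j`) the traversal enters (resp. leaves) a subtree of height `j`;
the symbol `left j` or `right j` on the stack records which child of a node of height `j + 1`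
is being visited. -/
inductive Edge (K : ℕ) : State K × StackOp (Symbol K) × State K → Prop
  | descendLeft {j : ℕ} : j < K → Edge K (down K (j + 1), .push (left K j), down K j)
  | leaf : Edge K (down K 0, .nop, up K 0)
  | returnLeft {j : ℕ} : j < K → Edge K (up K j, .pop (left K j), turn K j)
  | descendRight {j : ℕ} : j < K → Edge K (turn K j, .push (right K j), down K j)
  | returnRight {j : ℕ} : j < K → Edge K (up K j, .pop (right K j), up K (j + 1))

def pda (K : ℕ) : PDA (State K) (Symbol K) :=
  ⟨{e | Edge K e}⟩

theorem mem_edges_pda {K : ℕ} {e} (he : Edge K e) : e ∈ (pda K).edges :=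
  he

def traversal (K : ℕ) : ℕ → List (Symbol K) → List (State K × List (Symbol K))
  | 0, s => [(down K 0, s), (up K 0, s)]
  | j + 1, s => [(down K (j + 1), s)] ++ traversal K j (left K j :: s) ++ [(turn K j, s)] ++
      traversal K j (right K j :: s) ++ [(up K (j + 1), s)]

theorem length_traversal (K j : ℕ) (s : List (Symbol K)) :
    (traversal K j s).length + 3 = 5 * 2 ^ j := by
  induction j generalizing s with
  | zero => rfl
  | succ j ih =>
    have := ih (left K j :: s)
    have := ih (right K j :: s)
    simp only [traversal, List.length_append, List.length_singleton, pow_succ]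
    omega

theorem length_le_of_mem_traversal {K j : ℕ} {s : List (Symbol K)} {x}
    (hx : x ∈ traversal K j s) : x.2.length ≤ s.length + j := by
  induction j generalizing s with
  | zero =>
    simp only [traversal, List.mem_cons, List.not_mem_nil, or_false] at hx
    rcases hx with rfl | rfl <;> simp
  | succ j ih =>
    simp only [traversal, List.mem_append, List.mem_singleton] at hx
    rcases hx with (((rfl | hx) | rfl) | hx) | rfl
    all_goals first
      | simp
      | have := ih hx; simp only [List.length_cons] at this; omega

theorem isRun_traversal {K j : ℕ} (hj : j ≤ K) (s : List (Symbol K)) :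
    (pda K).IsRun (down K j, s) (up K j, s) (traversal K j s) := by
  induction j generalizing s with
  | zero => exact (isRun_singleton _).append (isRun_singleton _) (step_nop (mem_edges_pda .leaf) s)
  | succ j ih =>
    have hjK : j < K := hj
    have hA := (isRun_singleton _).append (ih hjK.le _)
      (step_push (mem_edges_pda (.descendLeft hjK)) s)
    have hAM := hA.append (isRun_singleton _) (step_pop (mem_edges_pda (.returnLeft hjK)) s)
    have hAMB := hAM.append (ih hjK.le _) (step_push (mem_edges_pda (.descendRight hjK)) s)
    exact hAMB.append (isRun_singleton _) (step_pop (mem_edges_pda (.returnRight hjK)) s)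

/-- Only `up j` has two outgoing edges, and they pop the distinct symbols `left j` and
`right j`. -/
theorem deterministic_pda (K : ℕ) : (pda K).Deterministic := by
  refine PDA.deterministic_of_edges fun e₁ he₁ e₂ he₂ hq => ?_
  cases he₁ <;> cases he₂ <;>
    first
    | (right; refine ⟨_, _, ?_, rfl, rfl⟩; simp [Fin.ext_iff, left, right]; omega)
    | (simp [Fin.ext_iff, down, up, turn, left, right] at hq ⊢ <;> omega)

theorem Edge.fst_ne_up_top {K : ℕ} {e} (he : Edge K e) : e.1 ≠ up K K := by
  cases he <;> simp [Fin.ext_iff, down, up, turn] <;> omega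

theorem not_step_up_top (K : ℕ) (s : List (Symbol K)) (c : State K × List (Symbol K)) :
    ¬ (pda K).Step (up K K, s) c :=
  fun ⟨_, he, _⟩ => Edge.fst_ne_up_top he rfl

end BinaryCounter

open BinaryCounter in
/-- For every `m ≥ 1` there is a PDA with `O(log m)` states and stack
symbols and configurations `C, C'` such that there is exactly one run from `C` to `C'`;
that run has length exactly `m` (i.e. visits `m+1` configurations), and its maximum
stack height is `O(log m)`. -/
theorem pda_binary_counter :
    ∃ c : ℕ, ∀ m : ℕ, 1 ≤ m →
      ∃ (nq ns : ℕ) (P : PDA (Fin nq) (Fin ns)) (C C' : Fin nq × List (Fin ns)),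
        nq ≤ c * (Nat.log 2 m + 1) ∧ ns ≤ c * (Nat.log 2 m + 1) ∧
        (∃! l : List (Fin nq × List (Fin ns)), P.IsRun C C' l) ∧
        ∀ l, P.IsRun C C' l →
          l.length = m + 1 ∧ ∀ x ∈ l, x.2.length ≤ c * (Nat.log 2 m + 1) := by
  refine ⟨6, fun m _ => ?_⟩
  set K := Nat.log 2 m + 1
  have hmK : m < 2 ^ K := Nat.lt_pow_succ_log_self (by norm_num) m
  set L := traversal K K []
  have hL : L.length + 3 = 5 * 2 ^ K := length_traversal K K []
  set n := L.length - (m + 1)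
  have hn : n < L.length := by omega
  have hrun := (isRun_traversal le_rfl []).drop hn
  have huniq l (hl : (pda K).IsRun L[n] (up K K, []) l) : l = L.drop n :=
    hl.eq (deterministic_pda K) (not_step_up_top K []) hrun
  refine ⟨3 * K + 3, 2 * K + 2, pda K, _, _, by omega, by omega, ⟨_, hrun, huniq⟩,
    fun l hl => ?_⟩
  obtain rfl := huniq l hl
  refine ⟨by rw [List.length_drop]; omega, fun x hx => ?_⟩
  have := length_le_of_mem_traversal (List.mem_of_mem_drop hx)
  rw [List.length_nil] at this
  omega
end

section
/- In the initialization gadget with counters (st, te, x, count), one iteration consists of four consecutive rule firings with fractions α₁,…,α₄ ∈ (0,1]: (te += 1, st −= 2; test st = 0), (st += 1, te −= 1; test te = 0), (te += 1, count += 1, x −= 1; test x = 0), (x += 1, te −= 1; test te = 0). If the starting configuration C has te = 0 and x = 1/m (for a fixed integer m ≥ 1) and st = s > 0, then a valid iteration from C ending in configuration C' exists if and only if C' agrees with C on all counters except that C'(st) = s/2 and C'(count) = C(count) + 1/m (provided these values lie in [0,1]). -/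
/-- A configuration of the initialization gadget: counters `st, te, x, count`. -/
structure InitConf where
  st : ℚ
  te : ℚ
  x : ℚ
  count : ℚ

/-- All four counters lie in `[0,1]`. -/
def InitConf.InBox (C : InitConf) : Prop :=
  (0 ≤ C.st ∧ C.st ≤ 1) ∧ (0 ≤ C.te ∧ C.te ≤ 1) ∧
    (0 ≤ C.x ∧ C.x ≤ 1) ∧ (0 ≤ C.count ∧ C.count ≤ 1)

/-- One complete iteration of the initialization gadget: four consecutive firings with
fractions `α₁,…,α₄ ∈ (0,1]`:
`(te += 1, st −= 2; test st = 0)`, `(st += 1, te −= 1; test te = 0)`,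
`(te += 1, count += 1, x −= 1; test x = 0)`, `(x += 1, te −= 1; test te = 0)`,
where every intermediate configuration stays in `[0,1]⁴`. -/
def InitIter (C C' : InitConf) : Prop :=
  ∃ α₁ α₂ α₃ α₄ : ℚ,
    (0 < α₁ ∧ α₁ ≤ 1) ∧ (0 < α₂ ∧ α₂ ≤ 1) ∧ (0 < α₃ ∧ α₃ ≤ 1) ∧ (0 < α₄ ∧ α₄ ≤ 1) ∧
    C.InBox ∧
    let D₁ : InitConf := ⟨C.st - 2 * α₁, C.te + α₁, C.x, C.count⟩
    D₁.InBox ∧ D₁.st = 0 ∧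
    let D₂ : InitConf := ⟨D₁.st + α₂, D₁.te - α₂, D₁.x, D₁.count⟩
    D₂.InBox ∧ D₂.te = 0 ∧
    let D₃ : InitConf := ⟨D₂.st, D₂.te + α₃, D₂.x - α₃, D₂.count + α₃⟩
    D₃.InBox ∧ D₃.x = 0 ∧
    let D₄ : InitConf := ⟨D₃.st, D₃.te - α₄, D₃.x + α₄, D₃.count⟩
    D₄.InBox ∧ D₄.te = 0 ∧ C' = D₄

/-- If `C` has `te = 0`, `x = 1/m` (for a fixed integer `m ≥ 1`) and
`st = s > 0`, and `C.count + 1/m ≤ 1` (the resulting values lie in `[0,1]`), then a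
valid iteration from `C` to `C'` exists iff `C'` agrees with `C` everywhere except
`C'.st = C.st/2` and `C'.count = C.count + 1/m`. -/
theorem init_gadget_iteration (m : ℕ) (hm : 1 ≤ m) (C C' : InitConf)
    (hbox : C.InBox) (hte : C.te = 0) (hx : C.x = 1 / (m : ℚ)) (hst : 0 < C.st)
    (hcount : C.count + 1 / (m : ℚ) ≤ 1) :
    InitIter C C' ↔
      (C'.st = C.st / 2 ∧ C'.te = C.te ∧ C'.x = C.x ∧
        C'.count = C.count + 1 / (m : ℚ)) := by
  have hm0 : (0 : ℚ) < (m : ℚ) := by exact_mod_cast Nat.pos_of_ne_zero (by omega)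
  have hm1 : (1 : ℚ) ≤ (m : ℚ) := by exact_mod_cast hm
  have hinv0 : (0 : ℚ) < 1 / (m : ℚ) := by positivity
  have hinv1 : 1 / (m : ℚ) ≤ 1 := by
    rw [div_le_one hm0]; exact hm1
  obtain ⟨⟨hst0, hst1⟩, _, hx01, ⟨hc0, hc1⟩⟩ := hbox
  constructor
  · rintro ⟨α₁, α₂, α₃, α₄, hα₁, hα₂, hα₃, hα₄, hCbox, h1box, h1st, h2box, h2te,
      h3box, h3x, h4box, h4te, hC'⟩
    simp only at h1st h2te h3x h4te hC'
    have e1 : α₁ = C.st / 2 := by linarith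
    have e2 : α₂ = C.st / 2 := by rw [hte] at h2te; linarith
    have e3 : α₃ = 1 / (m : ℚ) := by rw [hx] at h3x; linarith
    have e4 : α₄ = 1 / (m : ℚ) := by rw [hte] at h4te; linarith
    rw [one_div] at e3 e4
    subst hC'
    refine ⟨by simp [one_div]; linarith, by simp [hte, one_div]; linarith,
      by simp [hx, one_div]; linarith, by simp [one_div]; linarith⟩
  · rintro ⟨h1, h2, h3, h4⟩
    refine ⟨C.st / 2, C.st / 2, 1 / (m : ℚ), 1 / (m : ℚ),
      ⟨by linarith, by linarith⟩, ⟨by linarith, by linarith⟩,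
      ⟨hinv0, hinv1⟩, ⟨hinv0, hinv1⟩,
      ⟨⟨hst0, hst1⟩, by simp [hte], hx01, hc0, hc1⟩, ?_⟩
    simp only [hte, hx]
    refine ⟨⟨⟨by linarith, by linarith⟩, ⟨by linarith, by linarith⟩, ?_, hc0, hc1⟩,
      by ring, ⟨⟨by linarith, by linarith⟩, ⟨by linarith, by linarith⟩, ?_, hc0, hc1⟩,
      by ring, ⟨⟨by linarith, by linarith⟩, ⟨by linarith, by linarith⟩,
        ⟨by linarith, by linarith⟩, by linarith, by linarith⟩,
      by ring, ⟨⟨by linarith, by linarith⟩, ⟨by linarith, by linarith⟩,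
        ⟨by linarith, by linarith⟩, by linarith, by linarith⟩,
      by ring, ?_⟩
    · exact ⟨hinv0.le, hinv1⟩
    · exact ⟨hinv0.le, hinv1⟩
    · cases C' with
      | mk a b c d =>
        simp only [InitConf.mk.injEq]
        simp only at h1 h2 h3 h4
        refine ⟨?_, ?_, ?_, ?_⟩ <;> simp only [h1, h2, h3, h4, hte, hx] <;> ring
end

section
/- Iterating the halving-with-count gadget: starting from st = 1, te = 0, x = 1/m, count = 0, and requiring the final configuration to have count = 1, any sequence of complete iterations of the initialization gadget consists of exactly m iterations, and the final value of st is 1/2^m. -/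
/-- `k` successive complete iterations of the gadget. -/
inductive InitIterN : ℕ → InitConf → InitConf → Prop where
  | zero (C : InitConf) : InitIterN 0 C C
  | succ {k : ℕ} {C C' C'' : InitConf} :
      InitIter C C' → InitIterN k C' C'' → InitIterN (k + 1) C C''

/-- The configuration that a complete iteration from `C` must reach: the tests `st = 0`,
`te = 0`, `x = 0`, `te = 0` force `α₁ = st / 2`, `α₂ = te + st / 2`, `α₃ = α₄ = x`. -/
def InitConf.next (C : InitConf) : InitConf :=
  ⟨C.te + C.st / 2, 0, C.x, C.count + C.x⟩

theorem InitIter.eq_next {C C' : InitConf} (h : InitIter C C') : C' = C.next := by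
  obtain ⟨α₁, α₂, α₃, α₄, -, -, -, -, -, hD⟩ := h
  simp only at hD
  obtain ⟨-, hst, -, hte, -, hx, -, hte', rfl⟩ := hD
  simp only [InitConf.next, InitConf.mk.injEq]
  refine ⟨?_, ?_, ?_, ?_⟩ <;> linarith

theorem InitIterN.eq_iterate_next {k : ℕ} {C C' : InitConf} (h : InitIterN k C C') :
    C' = InitConf.next^[k] C := by
  induction h with
  | zero C => rfl
  | succ hstep _ ih => rw [ih, hstep.eq_next, Function.iterate_succ_apply]

theorem InitConf.iterate_next_of_te_eq_zero {C : InitConf} (hte : C.te = 0) (k : ℕ) :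
    InitConf.next^[k] C = ⟨C.st / 2 ^ k, 0, C.x, C.count + k * C.x⟩ := by
  induction k with
  | zero => cases C; simp_all
  | succ k ih =>
    rw [Function.iterate_succ_apply', ih, InitConf.next]
    congr 1 <;> push_cast <;> ring

theorem init_gadget_iterated_general (m : ℕ) (k : ℕ) (C' : InitConf)
    (h : InitIterN k ⟨1, 0, 1 / (m : ℚ), 0⟩ C')
    (hcount : C'.count = 1) :
    k = m ∧ C'.st = 1 / 2 ^ m := by
  rw [h.eq_iterate_next, InitConf.iterate_next_of_te_eq_zero rfl] at hcount ⊢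
  simp only [zero_add, mul_one_div] at hcount ⊢
  have hm : (m : ℚ) ≠ 0 := by
    rintro hm
    simp [hm] at hcount
  obtain rfl : k = m := by exact_mod_cast (div_eq_one_iff_eq hm).mp hcount
  exact ⟨rfl, rfl⟩

/-- Starting from `st = 1, te = 0, x = 1/m, count = 0` and requiring the
final configuration to have `count = 1`, any sequence of complete iterations of the
initialization gadget consists of exactly `m` iterations, and then `st = 1/2^m`. -/
theorem init_gadget_iterated (m : ℕ) (hm : 1 ≤ m) (k : ℕ) (C' : InitConf)
    (h : InitIterN k ⟨1, 0, 1 / (m : ℚ), 0⟩ C')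
    (hcount : C'.count = 1) :
    k = m ∧ C'.st = 1 / 2 ^ m :=
  init_gadget_iterated_general m k C' h hcount
end
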